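/- For p(x,y,z) = [x,[z,y]] + α[z,[x,y]] with α ∈ K and K having at least n elements, the image of p on UT_n is exactly UT_n^{(0)}: taking x = y = D a diagonal matrix with distinct entries, the map z ↦ [D,[z,D]] from UT_n surjects onto UT_n^{(0)}. -/

import Mathlib

/-!
Commutators of upper triangular matrices are strictly upper triangular, since the diagonal of
`A * B` is the pointwise product of the diagonals; hence `p` maps `UT_n` into `UT_n^{(0)}`.
Conversely, for `D = diagonal d` one has `[D, [Z, D]] i j = -(d i - d j) ^ 2 * Z i j`, so when the
`d i` are distinct every strictly upper triangular `M` is `[D, [Z, D]]` for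
`Z i j = -M i j / (d i - d j) ^ 2`, and then `p (D, D, Z) = [D, [Z, D]]` because `[D, D] = 0`.
-/

open Matrix

namespace Matrix

variable {m R : Type*} [Fintype m] [LinearOrder m]

lemma IsUpperTriangular.mul_apply_self [NonUnitalNonAssocSemiring R] {A B : Matrix m m R}
    (hA : A.IsUpperTriangular) (hB : B.IsUpperTriangular) (i : m) :
    (A * B) i i = A i i * B i i := by
  rw [mul_apply, Finset.sum_eq_single i]
  · intro k _ hki
    rcases lt_or_gt_of_ne hki with h | h
    · rw [hA h, zero_mul]
    · rw [hB h, mul_zero]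
  · simp

lemma IsUpperTriangular.commutator_apply_of_le [CommRing R] {A B : Matrix m m R}
    (hA : A.IsUpperTriangular) (hB : B.IsUpperTriangular) {i j : m} (hji : j ≤ i) :
    (A * B - B * A) i j = 0 := by
  rcases hji.lt_or_eq with hlt | rfl
  · exact ((hA.mul hB).sub (hB.mul hA)) hlt
  · rw [sub_apply, hA.mul_apply_self hB, hB.mul_apply_self hA, mul_comm, sub_self]

lemma IsUpperTriangular.commutator [CommRing R] {A B : Matrix m m R}
    (hA : A.IsUpperTriangular) (hB : B.IsUpperTriangular) :
    (A * B - B * A).IsUpperTriangular :=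
  fun _ _ h => hA.commutator_apply_of_le hB h.le

end Matrix

lemma Matrix.diagonal_commutator_commutator_apply {m R : Type*} [Fintype m] [DecidableEq m]
    [CommRing R] (d : m → R) (Z : Matrix m m R) (i j : m) :
    (diagonal d * (Z * diagonal d - diagonal d * Z)
      - (Z * diagonal d - diagonal d * Z) * diagonal d) i j = -(d i - d j) ^ 2 * Z i j := by
  simp only [sub_apply, diagonal_mul, mul_diagonal, mul_sub, sub_mul]
  ring

lemma Matrix.exists_isUpperTriangular_diagonal_commutator_commutator_eq {m K : Type*}
    [Fintype m] [LinearOrder m] [Field K] {d : m → K} (hd : Function.Injective d)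
    {M : Matrix m m K} (hM : ∀ i j, j ≤ i → M i j = 0) :
    ∃ Z : Matrix m m K, Z.IsUpperTriangular ∧
      M = diagonal d * (Z * diagonal d - diagonal d * Z)
        - (Z * diagonal d - diagonal d * Z) * diagonal d := by
  refine ⟨of fun i j => -M i j / (d i - d j) ^ 2, fun i j h => by simp [hM i j h.le], ?_⟩
  ext i j
  rw [diagonal_commutator_commutator_apply, of_apply]
  rcases eq_or_ne i j with rfl | hij
  · simp [hM i i le_rfl]
  · have : d i - d j ≠ 0 := sub_ne_zero.mpr (hd.ne hij)
    field_simp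

theorem stmt14_general {K : Type*} [Field K] {n : ℕ}
    (α : K) (d : Fin n → K) (hd : Function.Injective d) :
    ({X : Matrix (Fin n) (Fin n) K | ∃ A B C : Matrix (Fin n) (Fin n) K,
        (∀ a b : Fin n, b < a → A a b = 0) ∧ (∀ a b : Fin n, b < a → B a b = 0) ∧
        (∀ a b : Fin n, b < a → C a b = 0) ∧
        X = (A * (C * B - B * C) - (C * B - B * C) * A)
          + α • (C * (A * B - B * A) - (A * B - B * A) * C)}
      = {X : Matrix (Fin n) (Fin n) K | ∀ a b : Fin n, b ≤ a → X a b = 0}) ∧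
    (∀ M : Matrix (Fin n) (Fin n) K, (∀ a b : Fin n, b ≤ a → M a b = 0) →
      ∃ Z : Matrix (Fin n) (Fin n) K, (∀ a b : Fin n, b < a → Z a b = 0) ∧
        M = Matrix.diagonal d * (Z * Matrix.diagonal d - Matrix.diagonal d * Z)
          - (Z * Matrix.diagonal d - Matrix.diagonal d * Z) * Matrix.diagonal d) := by
  have surj : ∀ M : Matrix (Fin n) (Fin n) K, (∀ a b : Fin n, b ≤ a → M a b = 0) →
      ∃ Z : Matrix (Fin n) (Fin n) K, (∀ a b : Fin n, b < a → Z a b = 0) ∧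
        M = diagonal d * (Z * diagonal d - diagonal d * Z)
          - (Z * diagonal d - diagonal d * Z) * diagonal d := fun M hM => by
    obtain ⟨Z, hZ, rfl⟩ := exists_isUpperTriangular_diagonal_commutator_commutator_eq hd hM
    exact ⟨Z, fun _ _ h => hZ h, rfl⟩
  refine ⟨Set.ext fun X => ⟨?_, fun hX => ?_⟩, surj⟩
  · rintro ⟨A, B, C, hA, hB, hC, rfl⟩ a b hba
    have hA : A.IsUpperTriangular := fun a b h => hA a b h
    have hB : B.IsUpperTriangular := fun a b h => hB a b h
    have hC : C.IsUpperTriangular := fun a b h => hC a b h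
    rw [Matrix.add_apply, Matrix.smul_apply, hA.commutator_apply_of_le (hC.commutator hB) hba,
      hC.commutator_apply_of_le (hA.commutator hB) hba, smul_zero, add_zero]
  · obtain ⟨Z, hZ, hX⟩ := surj X hX
    have hD : ∀ a b : Fin n, b < a → diagonal d a b = 0 := fun _ _ h => diagonal_apply_ne d h.ne'
    refine ⟨diagonal d, diagonal d, Z, hD, hD, hZ, ?_⟩
    simpa only [sub_self, Matrix.mul_zero, Matrix.zero_mul, smul_zero, add_zero] using hX

/-- For `p(x,y,z) = [x,[z,y]] + α[z,[x,y]]` over a field with at least `n`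
elements, the image of `p` on `UT_n` is exactly `UT_n^{(0)}`; moreover for `D` diagonal
with distinct entries the map `z ↦ [D,[z,D]]` from `UT_n` surjects onto `UT_n^{(0)}`. -/
theorem stmt14 {K : Type*} [Field K] {n : ℕ} (hn : 2 ≤ n)
    (α : K) (d : Fin n → K) (hd : Function.Injective d) :
    ({X : Matrix (Fin n) (Fin n) K | ∃ A B C : Matrix (Fin n) (Fin n) K,
        (∀ a b : Fin n, b < a → A a b = 0) ∧ (∀ a b : Fin n, b < a → B a b = 0) ∧
        (∀ a b : Fin n, b < a → C a b = 0) ∧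
        X = (A * (C * B - B * C) - (C * B - B * C) * A)
          + α • (C * (A * B - B * A) - (A * B - B * A) * C)}
      = {X : Matrix (Fin n) (Fin n) K | ∀ a b : Fin n, b ≤ a → X a b = 0}) ∧
    (∀ M : Matrix (Fin n) (Fin n) K, (∀ a b : Fin n, b ≤ a → M a b = 0) →
      ∃ Z : Matrix (Fin n) (Fin n) K, (∀ a b : Fin n, b < a → Z a b = 0) ∧
        M = Matrix.diagonal d * (Z * Matrix.diagonal d - Matrix.diagonal d * Z)
          - (Z * Matrix.diagonal d - Matrix.diagonal d * Z) * Matrix.diagonal d) :=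
  stmt14_general α d hd
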